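/- arXiv:1804.03827 — 7 statements merged into one kernel-verified Lean document; each statement's English description precedes it below -/
import Mathlib

section
/- Fix x > 1 and define g(α) = α·x^α / (x^α - 1)² for α > 0. Then g is strictly decreasing on (0, ∞); in particular, for α > 1 one has g(α) < g(1), i.e., α·x^α/(x^α-1)² < x/(x-1)². -/
open Real Set

/-- For `0 < s`, `sinh s < s * cosh s`. -/
lemma aux_sinh_lt_mul_cosh {s : ℝ} (hs : 0 < s) : Real.sinh s < s * Real.cosh s := by
  have h : StrictMonoOn (fun t : ℝ => t * Real.cosh t - Real.sinh t) (Ici 0) := by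
    apply strictMonoOn_of_deriv_pos (convex_Ici 0)
    · exact ((continuous_id.mul Real.continuous_cosh).sub Real.continuous_sinh).continuousOn
    · intro t ht
      rw [interior_Ici, mem_Ioi] at ht
      have h1 : HasDerivAt (fun t : ℝ => t * Real.cosh t - Real.sinh t)
          (1 * Real.cosh t + t * Real.sinh t - Real.cosh t) t :=
        ((hasDerivAt_id t).mul (Real.hasDerivAt_cosh t)).sub (Real.hasDerivAt_sinh t)
      rw [h1.deriv]
      have := Real.sinh_pos_iff.mpr ht
      nlinarith
  have := h (self_mem_Ici) (le_of_lt hs : (0:ℝ) ≤ s) hs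
  simpa using this

/-- `sinh s / s` is strictly increasing: for `0 < s < u`, `sinh s / s < sinh u / u`. -/
lemma aux_sinh_div_lt {s u : ℝ} (hs : 0 < s) (hsu : s < u) :
    Real.sinh s / s < Real.sinh u / u := by
  have h : StrictMonoOn (fun t : ℝ => Real.sinh t / t) (Ioi 0) := by
    apply strictMonoOn_of_deriv_pos (convex_Ioi 0)
    · exact Real.continuous_sinh.continuousOn.div continuousOn_id
        (fun t ht => ne_of_gt ht)
    · intro t ht
      rw [interior_Ioi, mem_Ioi] at ht
      have h1 : HasDerivAt (fun t : ℝ => Real.sinh t / t)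
          ((Real.cosh t * t - Real.sinh t * 1) / t ^ 2) t :=
        (Real.hasDerivAt_sinh t).div (hasDerivAt_id t) (ne_of_gt ht)
      rw [h1.deriv]
      have h2 := aux_sinh_lt_mul_cosh ht
      have : 0 < t ^ 2 := by positivity
      apply div_pos _ this
      nlinarith
  exact h (mem_Ioi.mpr hs) (mem_Ioi.mpr (hs.trans hsu)) hsu

theorem g_strictAnti (x : ℝ) (hx : 1 < x) (g : ℝ → ℝ)
    (hg : ∀ α, g α = α * x ^ α / (x ^ α - 1) ^ 2) :
    StrictAntiOn g (Ioi 0) ∧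
    ∀ α > 1, α * x ^ α / (x ^ α - 1) ^ 2 < x / (x - 1) ^ 2 := by
  have hx0 : 0 < x := lt_trans one_pos hx
  have hL : 0 < Real.log x := Real.log_pos hx
  -- rewrite g in terms of sinh
  have key : ∀ α : ℝ, 0 < α →
      g α = α / (4 * Real.sinh (α * Real.log x / 2) ^ 2) := by
    intro α hα
    have hrpow : x ^ α = Real.exp (α * Real.log x) := by
      rw [Real.rpow_def_of_pos hx0, mul_comm]
    set t := α * Real.log x with ht
    have ht0 : 0 < t := mul_pos hα hL
    have hfac : x ^ α - 1 = Real.exp (t / 2) * (2 * Real.sinh (t / 2)) := by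
      rw [hrpow, Real.sinh_eq]
      have : Real.exp (t/2) * Real.exp (t/2) = Real.exp t := by
        rw [← Real.exp_add]; ring_nf
      have h2 : Real.exp (t/2) * Real.exp (-(t/2)) = 1 := by
        rw [← Real.exp_add]; simp
      linear_combination h2 - this
    rw [hg, hfac, hrpow]
    have he : Real.exp (t/2) ^ 2 = Real.exp t := by
      rw [← Real.exp_nat_mul]; ring_nf
    rw [mul_pow, he]
    have hexp : Real.exp t ≠ 0 := Real.exp_ne_zero t
    have hsinh : Real.sinh (t / 2) ≠ 0 := ne_of_gt (Real.sinh_pos_iff.mpr (by linarith))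
    field_simp
    ring
  have hanti : StrictAntiOn g (Ioi 0) := by
    intro a ha b hb hab
    rw [mem_Ioi] at ha hb
    rw [key a ha, key b hb]
    set s := a * Real.log x / 2 with hsdef
    set u := b * Real.log x / 2 with hudef
    have hs : 0 < s := by positivity
    have hu : 0 < u := by positivity
    have hsu : s < u := by
      have := mul_lt_mul_of_pos_right hab hL
      rw [hsdef, hudef]; linarith
    have hdiv := aux_sinh_div_lt hs hsu
    have hsinhs : 0 < Real.sinh s := Real.sinh_pos_iff.mpr hs
    have hsinhu : 0 < Real.sinh u := Real.sinh_pos_iff.mpr hu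
    have hsinh_lt : Real.sinh s < Real.sinh u := Real.sinh_lt_sinh.mpr hsu
    -- sinh s ^2 / s < sinh u ^ 2 / u
    have hsq : Real.sinh s ^ 2 / s < Real.sinh u ^ 2 / u := by
      have : Real.sinh s / s * Real.sinh s < Real.sinh u / u * Real.sinh u :=
        mul_lt_mul' (le_of_lt hdiv) hsinh_lt (le_of_lt hsinhs)
          (div_pos hsinhu hu)
      calc Real.sinh s ^ 2 / s = Real.sinh s / s * Real.sinh s := by ring
      _ < Real.sinh u / u * Real.sinh u := this
      _ = Real.sinh u ^ 2 / u := by ring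
    -- conclude b / (4 sinh u ^2) < a / (4 sinh s ^2)
    rw [div_lt_div_iff₀ (by positivity) (by positivity)]
    rw [div_lt_div_iff₀ hs hu] at hsq
    have hab' : b / a = u / s := by
      rw [hudef, hsdef]; field_simp
    -- b * (4 sinh s^2) < a * (4 sinh u^2)
    have : b * s = a * u := by
      rw [hudef, hsdef]; ring
    nlinarith [hsq, mul_pos ha hu]
  refine ⟨hanti, fun α hα => ?_⟩
  have h1 : (1:ℝ) ∈ Ioi (0:ℝ) := by norm_num
  have hα' : α ∈ Ioi (0:ℝ) := mem_Ioi.mpr (lt_trans one_pos hα)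
  have := hanti h1 hα' hα
  rw [hg α, hg 1, Real.rpow_one, one_mul] at this
  exact this
end

section
/- In the equal-benefit case E_i ≡ E with nutrient frequencies f_1 ≥ f_2 ≥ ... ≥ f_n > 0 summing to 1, the threshold κ_m at which the m-th response becomes active satisfies the equation (f_m/F_m)(1 + m x) = x where x = 1/(e^{κ_m E} - 1) and F_m = f_1 + ... + f_m; hence κ_m = (1/E)·ln(F_m/f_m - (m-1)). -/
/-!
Put `y := F_m / f_m - (m - 1)`. Since `f_m` is the smallest of `f_1, …, f_m` and `f_m < f_1`,
we have `m f_m < F_m`, i.e. `y > 1`, so `κ_m = log y / E` is well defined and `e^{κ_m E} = y`.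
Then `x = 1 / (y - 1) = f_m / (F_m - m f_m)`, and `1 + m x = F_m / (F_m - m f_m)`, so
`(f_m / F_m)(1 + m x) = x`.
-/

open Real Finset

theorem Finset.card_nsmul_lt_sum {ι M : Type*} [AddCommMonoid M] [PartialOrder M]
    [IsOrderedCancelAddMonoid M] (s : Finset ι) (f : ι → M) (c : M)
    (hle : ∀ i ∈ s, c ≤ f i) (hlt : ∃ i ∈ s, c < f i) :
    #s • c < ∑ i ∈ s, f i := by
  simpa only [sum_const] using sum_lt_sum hle hlt

theorem Real.exp_mul_of_eq_inv_mul_log {E y κ : ℝ} (hE : E ≠ 0) (hy : 0 < y)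
    (hκ : κ = (1 / E) * log y) : exp (κ * E) = y := by
  rw [hκ, one_div, inv_mul_eq_div, div_mul_cancel₀ _ hE, exp_log hy]

theorem div_mul_one_add_mul_inv_eq_inv {a F m : ℝ} (ha : a ≠ 0) (hF : F ≠ 0)
    (hd : F - m * a ≠ 0) :
    a / F * (1 + m * (1 / (F / a - (m - 1) - 1))) = 1 / (F / a - (m - 1) - 1) := by
  have hx : F / a - (m - 1) - 1 = (F - m * a) / a := by field_simp; ring
  rw [hx, one_div_div, mul_div_assoc', one_add_div hd, div_mul_div_comm,
    sub_add_cancel, mul_comm a F, mul_div_mul_left _ _ hF]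

theorem threshold_equal_benefit (E : ℝ) (hE : 0 < E) (n : ℕ) (f : ℕ → ℝ)
    (hfpos : ∀ i, 1 ≤ i → i ≤ n → 0 < f i)
    (hfmono : ∀ i j, 1 ≤ i → i ≤ j → j ≤ n → f j ≤ f i)
    (m : ℕ) (hm : 2 ≤ m) (hmn : m ≤ n) (hstrict : f m < f 1)
    (F : ℝ) (hF : F = ∑ j ∈ Finset.Icc 1 m, f j)
    (κ : ℝ) (hκ : κ = (1 / E) * Real.log (F / f m - (m - 1))) :
    1 < F / f m - (m - 1) ∧
    (f m / F) * (1 + m * (1 / (Real.exp (κ * E) - 1))) = 1 / (Real.exp (κ * E) - 1) := by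
  have hfm : 0 < f m := hfpos m (by omega) hmn
  have hmF : m * f m < F := by
    have := (Icc 1 m).card_nsmul_lt_sum f (f m)
      (fun i hi => hfmono i m (mem_Icc.1 hi).1 (mem_Icc.1 hi).2 hmn)
      ⟨1, mem_Icc.2 ⟨le_rfl, by omega⟩, hstrict⟩
    rwa [Nat.card_Icc, nsmul_eq_mul, add_tsub_cancel_right, ← hF] at this
  have hy : 1 < F / f m - (m - 1) := by
    rw [lt_sub_iff_add_lt, lt_div_iff₀ hfm]
    linarith
  have hFpos : 0 < F := lt_of_le_of_lt (by positivity) hmF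
  refine ⟨hy, ?_⟩
  rw [exp_mul_of_eq_inv_mul_log hE.ne' (by linarith) hκ]
  exact div_mul_one_add_mul_inv_eq_inv hfm.ne' hFpos.ne' (sub_ne_zero.2 hmF.ne')
end

section
/- For the equal-benefit case with frequencies proportional to 2^{-m} (f_m = 2^{-m}/(1 - 2^{-n}) for m = 1,...,n) and E = 1, the transition thresholds are κ_m = ln(2^m - m), and in particular κ_m/m → ln 2 as m → ∞ (linear growth in m despite exponential decay of frequencies). -/
/-! The partial geometric sum gives `F_m / f_m = 2 ^ m - 1`, hence `κ_m = log (2 ^ m - m)`.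
Since `m / 2 ^ m → 0`, the argument is `2 ^ m (1 + o(1))`, so `κ_m = m log 2 + o(1)`. -/

open Real Filter Finset

lemma sum_Icc_one_inv_two_pow (m : ℕ) :
    ∑ j ∈ Icc 1 m, ((2 : ℝ) ^ j)⁻¹ = 1 - ((2 : ℝ) ^ m)⁻¹ := by
  induction m with
  | zero => simp
  | succ n ih =>
    rw [sum_Icc_succ_top (by omega), ih, pow_succ]
    field_simp
    ring

lemma sum_Icc_one_inv_two_pow_div (m : ℕ) :
    (∑ j ∈ Icc 1 m, ((2 : ℝ) ^ j)⁻¹) / ((2 : ℝ) ^ m)⁻¹ = 2 ^ m - 1 := by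
  rw [sum_Icc_one_inv_two_pow]
  field_simp

lemma tendsto_log_div_natCast_of_tendsto_div_pow {u : ℕ → ℝ} {a L : ℝ} (ha : a ≠ 0)
    (hL : L ≠ 0) (hu : Tendsto (fun m => u m / a ^ m) atTop (nhds L)) :
    Tendsto (fun m : ℕ => log (u m) / m) atTop (nhds (log a)) := by
  have herr : Tendsto (fun m : ℕ => log (u m / a ^ m) / m) atTop (nhds 0) :=
    (hu.log hL).div_atTop tendsto_natCast_atTop_atTop
  have hsum := herr.const_add (log a)
  rw [add_zero] at hsum
  refine hsum.congr' ?_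
  filter_upwards [hu.eventually_ne hL, eventually_gt_atTop 0] with m hum hm
  have hu0 : u m ≠ 0 := fun h => hum (by simp [h])
  rw [log_div hu0 (pow_ne_zero m ha), log_pow]
  field_simp
  ring

lemma tendsto_pow_sub_natCast_div_pow {a : ℝ} (ha : 1 < a) :
    Tendsto (fun m : ℕ => (a ^ m - m) / a ^ m) atTop (nhds 1) := by
  have hsmall : Tendsto (fun m : ℕ => (m : ℝ) / a ^ m) atTop (nhds 0) := by
    simpa using tendsto_pow_const_div_const_pow_of_one_lt 1 ha
  have hlim := hsmall.const_sub 1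
  rw [sub_zero] at hlim
  refine hlim.congr fun m => ?_
  have : a ^ m ≠ 0 := pow_ne_zero m (by positivity)
  field_simp

theorem cascade_geometric (κ : ℕ → ℝ)
    (hκ : ∀ m, 1 ≤ m →
      κ m = Real.log ((∑ j ∈ Finset.Icc 1 m, ((2 : ℝ) ^ j)⁻¹) / ((2 : ℝ) ^ m)⁻¹ - (m - 1))) :
    (∀ m, 1 ≤ m → κ m = Real.log ((2 : ℝ) ^ m - m)) ∧
    Tendsto (fun m : ℕ => κ m / m) atTop (nhds (Real.log 2)) := by
  have hclosed : ∀ m, 1 ≤ m → κ m = log ((2 : ℝ) ^ m - m) := by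
    intro m hm
    rw [hκ m hm, sum_Icc_one_inv_two_pow_div]
    ring_nf
  refine ⟨hclosed, ?_⟩
  refine (tendsto_log_div_natCast_of_tendsto_div_pow two_ne_zero one_ne_zero
    (tendsto_pow_sub_natCast_div_pow one_lt_two)).congr' ?_
  filter_upwards [eventually_ge_atTop 1] with m hm
  rw [hclosed m hm]
end

section
/- In the equal-frequency case (f_i = 1/n) with distinct benefits E_1 > E_2 > ... > E_n > 0, the gap Δ_i(κ) = 1/h_{i+1}(κ) - 1/h_i(κ), where h_j(κ) = (1/n)(e^{κ E_j} - 1), is strictly decreasing in κ on (0, ∞). -/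
/-! With `g x = x eˣ / (eˣ - 1)²`, the gap is `n ((e^{κb} - 1)⁻¹ - (e^{κa} - 1)⁻¹)` with `0 < b < a`,
and its derivative is `n (g (κa) - g (κb)) / κ`. This is negative because `g` is strictly
decreasing on `(0, ∞)`: the numerator of `g'` has the sign of `(1 - x) eˣ - (1 + x)`, and
`(1 - x) eˣ ≤ e⁻ˣ eˣ = 1 < 1 + x`. -/

open Real Set

lemma strictAntiOn_of_hasDerivAt_neg {D : Set ℝ} (hD : Convex ℝ D) {f f' : ℝ → ℝ}
    (hf : ∀ x ∈ D, HasDerivAt f (f' x) x) (hf' : ∀ x ∈ D, f' x < 0) : StrictAntiOn f D :=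
  strictAntiOn_of_hasDerivWithinAt_neg hD (fun x hx => (hf x hx).continuousAt.continuousWithinAt)
    (fun x hx => (hf x (interior_subset hx)).hasDerivWithinAt)
    (fun x hx => hf' x (interior_subset hx))

lemma one_sub_mul_exp_lt_one_add {x : ℝ} (hx : 0 < x) : (1 - x) * exp x < 1 + x := by
  have h : (1 - x) * exp x ≤ exp (-x) * exp x := by
    gcongr
    linarith [add_one_le_exp (-x)]
  rw [← exp_add, neg_add_cancel, exp_zero] at h
  linarith

lemma hasDerivAt_mul_exp_div_exp_sub_one_sq {x : ℝ} (hx : x ≠ 0) :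
    HasDerivAt (fun x => x * exp x / (exp x - 1) ^ 2)
      (exp x * ((1 - x) * exp x - (1 + x)) / (exp x - 1) ^ 3) x := by
  have hne : exp x - 1 ≠ 0 := by simpa [sub_eq_zero] using hx
  have hnum : HasDerivAt (fun x => x * exp x) (1 * exp x + x * exp x) x :=
    (hasDerivAt_id x).mul (hasDerivAt_exp x)
  have hden : HasDerivAt (fun x => (exp x - 1) ^ 2) ((2 : ℕ) * (exp x - 1) ^ (2 - 1) * exp x) x :=
    ((hasDerivAt_exp x).sub_const 1).pow 2
  refine (hnum.fun_div hden (pow_ne_zero 2 hne)).congr_deriv ?_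
  rw [div_eq_div_iff (pow_ne_zero 2 (pow_ne_zero 2 hne)) (pow_ne_zero 3 hne)]
  push_cast
  ring

lemma strictAntiOn_mul_exp_div_exp_sub_one_sq :
    StrictAntiOn (fun x => x * exp x / (exp x - 1) ^ 2) (Ioi 0) := by
  refine strictAntiOn_of_hasDerivAt_neg (convex_Ioi 0)
    (fun x hx => hasDerivAt_mul_exp_div_exp_sub_one_sq (ne_of_gt hx)) (fun x hx => ?_)
  rw [mem_Ioi] at hx
  have hpos : 0 < exp x - 1 := by linarith [add_one_lt_exp (ne_of_gt hx)]
  exact div_neg_of_neg_of_pos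
    (mul_neg_of_pos_of_neg (exp_pos x) (by linarith [one_sub_mul_exp_lt_one_add hx]))
    (by positivity)

lemma hasDerivAt_inv_exp_mul_sub_one {c κ : ℝ} (h : κ * c ≠ 0) :
    HasDerivAt (fun κ => (exp (κ * c) - 1)⁻¹) (-(c * exp (κ * c)) / (exp (κ * c) - 1) ^ 2) κ := by
  have hne : exp (κ * c) - 1 ≠ 0 := by simpa [sub_eq_zero] using h
  have hd : HasDerivAt (fun κ => exp (κ * c) - 1) (exp (κ * c) * c) κ :=
    ((hasDerivAt_mul_const c).exp).sub_const 1
  rw [mul_comm (exp _) c] at hd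
  exact hd.inv hne

lemma strictAntiOn_inv_exp_mul_sub_one_sub {a b : ℝ} (hb : 0 < b) (hba : b < a) :
    StrictAntiOn (fun κ => (exp (κ * b) - 1)⁻¹ - (exp (κ * a) - 1)⁻¹) (Ioi 0) := by
  have ha : 0 < a := hb.trans hba
  refine strictAntiOn_of_hasDerivAt_neg (convex_Ioi 0)
    (fun κ hκ => (hasDerivAt_inv_exp_mul_sub_one (mul_pos hκ hb).ne').sub
      (hasDerivAt_inv_exp_mul_sub_one (mul_pos hκ ha).ne')) (fun κ hκ => ?_)
  rw [mem_Ioi] at hκ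
  have hg := strictAntiOn_mul_exp_div_exp_sub_one_sq (mem_Ioi.mpr (mul_pos hκ hb))
    (mem_Ioi.mpr (mul_pos hκ ha)) (mul_lt_mul_of_pos_left hba hκ)
  simp only [mul_assoc κ] at hg
  rw [mul_div_assoc κ, mul_div_assoc κ] at hg
  rw [neg_div, neg_div, sub_neg_eq_add, neg_add_lt_iff_lt_add, add_zero]
  exact lt_of_mul_lt_mul_left hg hκ.le

theorem gap_strictAnti_equal_freq_general (n : ℕ) (E : Fin n → ℝ)
    (hEanti : StrictAnti E) (hEpos : ∀ j, 0 < E j)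
    (i : ℕ) (hi : i + 1 < n)
    (h : Fin n → ℝ → ℝ)
    (hh : ∀ j κ, h j κ = (1 / n) * (Real.exp (κ * E j) - 1))
    (Δ : ℝ → ℝ)
    (hΔ : ∀ κ, Δ κ = 1 / h ⟨i + 1, hi⟩ κ - 1 / h ⟨i, Nat.lt_of_succ_lt hi⟩ κ) :
    StrictAntiOn Δ (Ioi 0) := by
  have hn : (0 : ℝ) < n := by exact_mod_cast i.succ_pos.trans hi
  have hΔ_eq (κ : ℝ) : Δ κ = n * ((exp (κ * E ⟨i + 1, hi⟩) - 1)⁻¹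
      - (exp (κ * E ⟨i, Nat.lt_of_succ_lt hi⟩) - 1)⁻¹) := by
    simp only [hΔ, hh, one_div, mul_inv, inv_inv]
    ring
  have hgap := strictAntiOn_inv_exp_mul_sub_one_sub (hEpos ⟨i + 1, hi⟩)
    (hEanti (show (⟨i, Nat.lt_of_succ_lt hi⟩ : Fin n) < ⟨i + 1, hi⟩ from i.lt_succ_self))
  intro x hx y hy hxy
  rw [hΔ_eq, hΔ_eq]
  exact mul_lt_mul_of_pos_left (hgap hx hy hxy) hn

theorem gap_strictAnti_equal_freq (n : ℕ) (hn : 2 ≤ n) (E : Fin n → ℝ)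
    (hEanti : StrictAnti E) (hEpos : ∀ j, 0 < E j)
    (i : ℕ) (hi : i + 1 < n)
    (h : Fin n → ℝ → ℝ)
    (hh : ∀ j κ, h j κ = (1 / n) * (Real.exp (κ * E j) - 1))
    (Δ : ℝ → ℝ)
    (hΔ : ∀ κ, Δ κ = 1 / h ⟨i + 1, hi⟩ κ - 1 / h ⟨i, Nat.lt_of_succ_lt hi⟩ κ) :
    StrictAntiOn Δ (Ioi 0) :=
  gap_strictAnti_equal_freq_general n E hEanti hEpos i hi h hh Δ hΔ
end

section
/- For the diagonal model, the stationarity conditions imply that for every active response i (p(i) > 0), the marginal satisfies p(i) = f_i/(1 - C) - 1/(e^{κ E_i} - 1), where C = ∑_α f_α/(1 + p(α)(e^{κ E_α} - 1)); consequently p(i) > 0 if and only if f_i(e^{κ E_i} - 1) > 1 - C. -/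
open Real Finset

theorem marginal_closed_form (n : ℕ) (f E p : Fin n → ℝ) (κ : ℝ) (hκ : 0 < κ)
    (hf : ∀ α, 0 < f α) (hfsum : ∑ α, f α = 1)
    (hE : ∀ α, 0 < E α) (hp : ∀ α, 0 ≤ p α) (hpsum : ∑ α, p α = 1)
    (hopt_pos : ∀ i, 0 < p i →
      (∑ α ∈ Finset.univ.erase i, f α / (1 + p α * (Real.exp (κ * E α) - 1)))
        + f i * Real.exp (κ * E i) / (1 + p i * (Real.exp (κ * E i) - 1)) = 1)
    (hopt_zero : ∀ i, p i = 0 →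
      (∑ α ∈ Finset.univ.erase i, f α / (1 + p α * (Real.exp (κ * E α) - 1)))
        + f i * Real.exp (κ * E i) / (1 + p i * (Real.exp (κ * E i) - 1)) ≤ 1)
    (C : ℝ) (hC : C = ∑ α, f α / (1 + p α * (Real.exp (κ * E α) - 1))) :
    (∀ i, 0 < p i → p i = f i / (1 - C) - 1 / (Real.exp (κ * E i) - 1)) ∧
    (∀ i, 0 < p i ↔ 1 - C < f i * (Real.exp (κ * E i) - 1)) := by
  have hE' : ∀ α, 0 < Real.exp (κ * E α) - 1 := by
    intro α
    have h : κ * E α ≠ 0 := ne_of_gt (mul_pos hκ (hE α))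
    nlinarith [Real.add_one_lt_exp h, mul_pos hκ (hE α)]
  have hg : ∀ α, 0 < 1 + p α * (Real.exp (κ * E α) - 1) := by
    intro α
    have := mul_nonneg (hp α) (le_of_lt (hE' α))
    linarith
  have hsplit : ∀ i, (∑ α ∈ Finset.univ.erase i, f α / (1 + p α * (Real.exp (κ * E α) - 1)))
      = C - f i / (1 + p i * (Real.exp (κ * E i) - 1)) := by
    intro i
    rw [hC, ← Finset.sum_erase_add Finset.univ _ (Finset.mem_univ i)]
    ring
  have hA : ∀ i, 0 < p i →
      f i * (Real.exp (κ * E i) - 1)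
        = (1 - C) * (1 + p i * (Real.exp (κ * E i) - 1)) := by
    intro i hi
    have h1 := hopt_pos i hi
    rw [hsplit i] at h1
    have hgi := (hg i).ne'
    field_simp at h1
    nlinarith [h1]
  have hex : ∃ i, 0 < p i := by
    by_contra h
    push_neg at h
    have hz : ∀ i, p i = 0 := fun i => le_antisymm (h i) (hp i)
    rw [Finset.sum_congr rfl fun i _ => hz i] at hpsum
    simp at hpsum
  obtain ⟨i0, hi0⟩ := hex
  have hCpos : 0 < 1 - C := by
    have h := hA i0 hi0
    have h2 := mul_pos (hf i0) (hE' i0)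
    nlinarith [hg i0]
  constructor
  · intro i hi
    have h := hA i hi
    have hgi := hg i
    have hei := hE' i
    field_simp
    nlinarith [h]
  · intro i
    constructor
    · intro hi
      have h := hA i hi
      nlinarith [mul_pos hi (hE' i), hCpos]
    · intro h
      rcases (hp i).lt_or_eq with hlt | heq
      · exact hlt
      · exfalso
        have h1 := hopt_zero i heq.symm
        rw [hsplit i, ← heq] at h1
        simp at h1
        nlinarith
end

section
/- Suppose E_2 ≪ E_1. The exact coding transition κ_2 for equal frequencies solves e^{κE_2} - 1 = 1 - e^{-κE_1}; in the limit E_1 → ∞ with E_2 fixed, the solution κ_2(E_1) converges to (ln 2)/E_2. -/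
open Real Filter

theorem coding_transition_limit (E₂ : ℝ) (hE₂ : 0 < E₂) (κ₂ : ℝ → ℝ)
    (hκ₂ : ∀ E₁ > E₂, 0 < κ₂ E₁ ∧
      Real.exp (κ₂ E₁ * E₂) - 1 = 1 - Real.exp (-(κ₂ E₁ * E₁))) :
    Tendsto κ₂ atTop (nhds (Real.log 2 / E₂)) := by
  rw [tendsto_order]
  constructor
  · intro b hb
    rcases le_or_gt b 0 with hb0 | hb0
    · filter_upwards [eventually_gt_atTop E₂] with E₁ h
      exact lt_of_le_of_lt hb0 (hκ₂ E₁ h).1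
    · have hbE : Real.exp (b * E₂) < 2 := by
        have hlt : b * E₂ < Real.log 2 := by
          rw [lt_div_iff₀ hE₂] at hb; linarith
        calc Real.exp (b * E₂) < Real.exp (Real.log 2) := Real.exp_lt_exp.2 hlt
          _ = 2 := Real.exp_log (by norm_num)
      set ε := 2 - Real.exp (b * E₂) with hε
      have hεpos : 0 < ε := by simp [hε]; linarith
      filter_upwards [eventually_gt_atTop E₂, eventually_gt_atTop (2 * E₂ / ε)] with E₁ h1 h2
      by_contra hle
      push_neg at hle
      obtain ⟨hκpos, heq⟩ := hκ₂ E₁ h1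
      set κ := κ₂ E₁ with hκ
      have hE₁pos : 0 < E₁ := lt_trans hE₂ h1
      have hmono : Real.exp (κ * E₂) ≤ Real.exp (b * E₂) :=
        Real.exp_le_exp.2 (mul_le_mul_of_nonneg_right hle hE₂.le)
      have h3 : ε ≤ Real.exp (-(κ * E₁)) := by
        simp only [hε]; linarith
      have h4 : κ * E₁ * Real.exp (-(κ * E₁)) ≤ 1 - Real.exp (-(κ * E₁)) := by
        have h := Real.add_one_le_exp (κ * E₁)
        have hprod : Real.exp (-(κ * E₁)) * Real.exp (κ * E₁) = 1 := by
          rw [← Real.exp_add]; simp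
        nlinarith [mul_le_mul_of_nonneg_left h (Real.exp_pos (-(κ * E₁))).le]
      have h5 : Real.exp (κ * E₂) - 1 ≤ κ * E₂ * Real.exp (κ * E₂) := by
        have h := Real.add_one_le_exp (-(κ * E₂))
        have hprod : Real.exp (κ * E₂) * Real.exp (-(κ * E₂)) = 1 := by
          rw [← Real.exp_add]; simp
        nlinarith [mul_le_mul_of_nonneg_left h (Real.exp_pos (κ * E₂)).le]
      have hexpk2 : Real.exp (κ * E₂) ≤ 2 := by linarith
      have hchain : κ * E₁ * ε ≤ κ * E₂ * 2 := by
        have hk1 : κ * E₁ * ε ≤ κ * E₁ * Real.exp (-(κ * E₁)) :=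
          mul_le_mul_of_nonneg_left h3 (by positivity)
        have hk2 : κ * E₂ * Real.exp (κ * E₂) ≤ κ * E₂ * 2 :=
          mul_le_mul_of_nonneg_left hexpk2 (by positivity)
        linarith
      have hfin : E₁ ≤ 2 * E₂ / ε := by
        rw [le_div_iff₀ hεpos]
        nlinarith
      linarith
  · intro b hb
    filter_upwards [eventually_gt_atTop E₂] with E₁ h1
    obtain ⟨hκpos, heq⟩ := hκ₂ E₁ h1
    have h2 : Real.exp (κ₂ E₁ * E₂) < 2 := by
      have := Real.exp_pos (-(κ₂ E₁ * E₁))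
      linarith
    have h3 : κ₂ E₁ * E₂ < Real.log 2 := by
      rw [← Real.exp_lt_exp, Real.exp_log (by norm_num : (0:ℝ) < 2)]
      exact h2
    have h4 : κ₂ E₁ < Real.log 2 / E₂ := by rwa [lt_div_iff₀ hE₂]
    linarith
end

section
/- The equation e^{κ E_2} - 1 = 1 - e^{-κ E_1} with E_1 ≥ E_2 > 0 has a unique positive solution κ*, and κ* ≤ (ln 2)/E_2. -/
/-!
With `F κ = exp (κ E₂) + exp (-κ E₁)` the equation reads `F κ = F 0 = 2`. `F` is strictly convex
with `F' 0 = E₂ - E₁ < 0` and `F ((ln 2) / E₂) > 2`, so `F` dips below `F 0` just after `0` and a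
root exists by the intermediate value theorem. Strict convexity makes `F` strictly increasing past
any point `y > 0` with `F 0 ≤ F y`: this excludes a second positive root and any root beyond
`(ln 2) / E₂`.
-/

open Real Set Filter Topology

theorem StrictConvexOn.lt_right_of_left_le'' {s : Set ℝ} {f : ℝ → ℝ} {x y z : ℝ}
    (hf : StrictConvexOn ℝ s f) (hx : x ∈ s) (hz : z ∈ s) (hxy : x < y) (hyz : y < z)
    (h : f x ≤ f y) : f y < f z := by
  have hslope := hf.slope_strict_mono_adjacent hx hz hxy hyz
  have hleft : 0 ≤ (f y - f x) / (y - x) := div_nonneg (by linarith) (by linarith)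
  have := (div_pos_iff_of_pos_right (sub_pos.2 hyz)).1 (hleft.trans_lt hslope)
  linarith

theorem HasDerivAt.eventually_nhdsGT_lt {f : ℝ → ℝ} {f' a : ℝ} (hf : HasDerivAt f f' a)
    (hf' : f' < 0) : ∀ᶠ t in 𝓝[>] a, f t < f a := by
  have hslope : ∀ᶠ t in 𝓝[>] a, slope f a t < 0 :=
    ((hasDerivAt_iff_tendsto_slope.1 hf).eventually (gt_mem_nhds hf')).filter_mono
      (nhdsWithin_mono a fun _ ht => ne_of_gt ht)
  filter_upwards [hslope, self_mem_nhdsWithin] with t ht hat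
  exact (slope_neg_iff_of_le hat.le).1 ht

theorem StrictConvexOn.existsUnique_eq_of_hasDerivAt_neg {f : ℝ → ℝ} {a b f' : ℝ}
    (hf : StrictConvexOn ℝ (Ici a) f) (hd : HasDerivAt f f' a) (hf' : f' < 0) (hab : a < b)
    (hfb : f a < f b) :
    (∃! x, a < x ∧ f x = f a) ∧ ∀ x, a < x → f x = f a → x < b := by
  have below_b : ∀ x, a < x → f x = f a → x < b := by
    intro x hx hfx
    by_contra! hbx
    rcases hbx.eq_or_lt with rfl | hbx
    · exact hfb.ne' hfx
    · linarith [hf.lt_right_of_left_le'' self_mem_Ici (hab.trans hbx).le hab hbx hfb.le]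
  obtain ⟨t, hft, hat, htb⟩ :=
    (hd.eventually_nhdsGT_lt hf' |>.and (Ioo_mem_nhdsGT hab)).exists
  have hcont : ContinuousOn f (Icc t b) :=
    hf.convexOn.continuousOn_interior.mono fun x hx => by
      rw [interior_Ici]; exact hat.trans_le hx.1
  obtain ⟨x, hx, hfx⟩ := intermediate_value_Icc htb.le hcont ⟨hft.le, hfb.le⟩
  have hax : a < x := hat.trans_le hx.1
  refine ⟨⟨x, ⟨hax, hfx⟩, fun y ⟨hay, hfy⟩ => ?_⟩, below_b⟩
  by_contra! hyx
  rcases hyx.lt_or_gt with hyx | hxy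
  · exact (hf.lt_right_of_left_le'' self_mem_Ici hax.le hay hyx hfy.ge).ne (hfy.trans hfx.symm)
  · exact (hf.lt_right_of_left_le'' self_mem_Ici hay.le hax hxy hfx.ge).ne (hfx.trans hfy.symm)

theorem strictConvexOn_exp_mul_const {c : ℝ} (hc : c ≠ 0) :
    StrictConvexOn ℝ univ fun x => exp (x * c) := by
  refine ⟨convex_univ, fun x _ y _ hxy a b ha hb hab => ?_⟩
  have := strictConvexOn_exp.2 (mem_univ (x * c)) (mem_univ (y * c))
    (by simpa [hc] using hxy) ha hb hab
  simpa only [smul_eq_mul, add_mul, mul_assoc] using this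

theorem unique_coding_transition (E₁ E₂ : ℝ) (hE₂ : 0 < E₂) (hE : E₂ < E₁) :
    (∃! κ : ℝ, 0 < κ ∧ Real.exp (κ * E₂) - 1 = 1 - Real.exp (-(κ * E₁))) ∧
    ∀ κ : ℝ, 0 < κ → Real.exp (κ * E₂) - 1 = 1 - Real.exp (-(κ * E₁)) →
      κ < Real.log 2 / E₂ := by
  set F : ℝ → ℝ := fun κ => exp (κ * E₂) + exp (κ * -E₁)
  have hroot (κ : ℝ) : exp (κ * E₂) - 1 = 1 - exp (-(κ * E₁)) ↔ F κ = F 0 := by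
    simp only [F, zero_mul, neg_zero, exp_zero, mul_neg]
    constructor <;> intro h <;> linarith
  have hconv : StrictConvexOn ℝ (Ici 0) F :=
    ((strictConvexOn_exp_mul_const hE₂.ne').add
      (strictConvexOn_exp_mul_const (neg_ne_zero.2 (hE₂.trans hE).ne'))).subset
      (subset_univ _) (convex_Ici 0)
  have hderiv : HasDerivAt F (E₂ - E₁) 0 := by
    rw [sub_eq_add_neg]
    have := (hasDerivAt_mul_const E₂).exp.add (hasDerivAt_mul_const (-E₁)).exp (x := 0)
    simp only [zero_mul, exp_zero, one_mul] at this
    exact this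
  have hF_log_two : F 0 < F (log 2 / E₂) := by
    have : exp (log 2 / E₂ * E₂) = 2 := by rw [div_mul_cancel₀ _ hE₂.ne', exp_log two_pos]
    simp only [F, this, zero_mul, exp_zero]
    linarith [exp_pos (log 2 / E₂ * -E₁)]
  simp_rw [hroot]
  exact hconv.existsUnique_eq_of_hasDerivAt_neg hderiv (by linarith)
    (div_pos (log_pos one_lt_two) hE₂) hF_log_two
end
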